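/- Let C be a completed PDAG and x − y an undirected edge such that the common neighbor set N_{xy} is a clique in C. Let P' be the mixed graph obtained from C by deleting the undirected edge x − y. Then P' is a chain graph, every chain component of P' is chordal, no induced subgraph of the form w → u − v with w, v nonadjacent occurs in P', and every directed edge of P' is strongly protected; hence P' is itself a completed PDAG. -/

import Mathlib

/-!
Deleting undirected edges changes no orientation, so being a chain graph survives, and so does
the absence of flags (the missing adjacency of a flag `w → u − v` cannot be an undirected
`w − v`, which would close a partially directed triangle). Strong protection survives too: if
configuration (d) loses its edge `v − w`, then `w → u` protects `v → u` as configuration (b).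

Only chordality uses the clique hypothesis. A chordless cycle of length at least 4 of `P'` has a
chord in `C`, which we may assume is `x − y`. This chord splits the cycle into two arcs. If an
arc has at least two inner vertices, it closes with `x − y` into a cycle of `C` of length at
least 4, and a chord of that cycle is a chord of the original one other than `x − y`.
Otherwise both arcs have a single inner vertex, `p` and `q`; these are common neighbours of `x`
and `y`, hence adjacent, and `p − q` is undirected since a triangle with a directed edge is a
partially directed cycle.
-/

structure MixedGraph (V : Type*) where
  dir : V → V → Prop
  undir : V → V → Prop
  undir_symm : ∀ x y, undir x y → undir y x
  dir_irrefl : ∀ x, ¬ dir x x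
  undir_irrefl : ∀ x, ¬ undir x x
  dir_asymm : ∀ x y, dir x y → ¬ dir y x
  not_both : ∀ x y, dir x y → ¬ undir x y

namespace MixedGraph

variable {V : Type*} (G : MixedGraph V)

/-- `a` and `b` are joined by some edge, oriented from `a` to `b` if directed. -/
def edge (a b : V) : Prop := G.dir a b ∨ G.undir a b

/-- `a` and `b` are adjacent (joined by a directed or undirected edge). -/
def adj (a b : V) : Prop := G.dir a b ∨ G.dir b a ∨ G.undir a b

/-- The consecutive (cyclic) pairs of the cycle `v :: l`. -/
def cyclePairs (v : V) (l : List V) : List (V × V) := (v :: l).zip (l ++ [v])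

/-- `v :: l` is a partially directed cycle: at least two distinct vertices, every
cyclically consecutive pair joined by an edge (directed forward or undirected),
and at least one such edge directed. -/
def IsPDCycle (v : V) (l : List V) : Prop :=
  l ≠ [] ∧ (v :: l).Nodup ∧
  (∀ p ∈ cyclePairs v l, G.edge p.1 p.2) ∧
  (∃ p ∈ cyclePairs v l, G.dir p.1 p.2)

/-- A chain graph contains no partially directed cycle. -/
def IsChainGraph : Prop := ∀ (v : V) (l : List V), ¬ G.IsPDCycle v l

/-- `v :: l` is an undirected cycle of length at least 4. -/
def IsUCycle (v : V) (l : List V) : Prop :=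
  4 ≤ (v :: l).length ∧ (v :: l).Nodup ∧
  (∀ p ∈ cyclePairs v l, G.undir p.1 p.2)

/-- The cycle `v :: l` has a chord: an undirected edge between two vertices of the
cycle that is not one of the cycle's edges. -/
def HasChord (v : V) (l : List V) : Prop :=
  ∃ a b, a ∈ v :: l ∧ b ∈ v :: l ∧ G.undir a b ∧
    (a, b) ∉ cyclePairs v l ∧ (b, a) ∉ cyclePairs v l

/-- Every undirected cycle of length at least 4 has a chord; equivalently every
chain component induces a chordal undirected graph. -/
def IsChordalUndir : Prop := ∀ v l, G.IsUCycle v l → G.HasChord v l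

/-- No induced subgraph `w → u − v` with `w, v` nonadjacent. -/
def NoFlag : Prop := ∀ w u v, G.dir w u → G.undir u v → G.adj w v

/-- The directed edge `v → u` is strongly protected: it occurs in one of the four
protecting configurations. -/
def StronglyProtected (v u : V) : Prop :=
  (∃ w, G.dir w v ∧ ¬ G.adj w u) ∨
  (∃ w, G.dir w u ∧ w ≠ v ∧ ¬ G.adj v w) ∨
  (∃ w, G.dir v w ∧ G.dir w u) ∨
  (∃ w w₁, w ≠ w₁ ∧ G.undir v w ∧ G.undir v w₁ ∧ G.dir w u ∧ G.dir w₁ u ∧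
    ¬ G.adj w w₁)

/-- Andersson's characterization: a completed PDAG (essential graph) is a chain
graph with chordal chain components, no induced flag `w → u − v`, and all
directed edges strongly protected. -/
def IsCompletedPDAG : Prop :=
  G.IsChainGraph ∧ G.IsChordalUndir ∧ G.NoFlag ∧
  ∀ v u, G.dir v u → G.StronglyProtected v u

/-- The neighbour set of `v`: vertices joined to `v` by an undirected edge. -/
def nbhd (v : V) : Set V := {u | G.undir v u}

/-- The parent set of `v`: vertices with a directed edge into `v`. -/
def parents (v : V) : Set V := {u | G.dir u v}

end MixedGraph

namespace MixedGraph

variable {V : Type*}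

def IsDiagonal (v : V) (l : List V) (a b : V) : Prop :=
  a ∈ v :: l ∧ b ∈ v :: l ∧ (a, b) ∉ cyclePairs v l ∧ (b, a) ∉ cyclePairs v l

lemma cyclePairs_eq_zip_rotate_one (v : V) (l : List V) :
    cyclePairs v l = (v :: l).zip ((v :: l).rotate 1) := by
  simp [cyclePairs]

lemma cyclePairs_isRotated {v a : V} {l l₁ : List V} (h : (v :: l) ~r (a :: l₁)) :
    cyclePairs v l ~r cyclePairs a l₁ := by
  obtain ⟨n, hn⟩ := h
  refine ⟨n, ?_⟩
  rw [cyclePairs_eq_zip_rotate_one, cyclePairs_eq_zip_rotate_one, ← hn, List.zip_eq_zipWith,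
    List.zipWith_rotate_distrib _ _ _ _ (by simp), List.rotate_rotate, List.rotate_rotate,
    Nat.add_comm, List.zip_eq_zipWith]

lemma isDiagonal_iff_of_isRotated {v a : V} {l l₁ : List V} (h : (v :: l) ~r (a :: l₁))
    {c d : V} : IsDiagonal v l c d ↔ IsDiagonal a l₁ c d := by
  simp only [IsDiagonal, h.mem_iff, (cyclePairs_isRotated h).mem_iff]

lemma cyclePairs_append_cons (a b : V) (L₂ L₃ : List V) :
    cyclePairs a (L₂ ++ b :: L₃) =
      (a :: L₂).zip (L₂ ++ [b]) ++ (b :: L₃).zip (L₃ ++ [a]) := by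
  rw [← List.zip_append (by simp)]
  simp [cyclePairs]

lemma cyclePairs_append_singleton (a b : V) (L : List V) :
    cyclePairs a (L ++ [b]) = (a :: L).zip (L ++ [b]) ++ [(b, a)] := by
  simpa using cyclePairs_append_cons a b L []

lemma IsDiagonal.sym2_ne {v : V} {l : List V} {c d a b : V} (h : IsDiagonal v l c d)
    (hab : (a, b) ∈ cyclePairs v l) : s(c, d) ≠ s(a, b) := by
  rw [Ne, Sym2.eq_iff]
  rintro (⟨rfl, rfl⟩ | ⟨rfl, rfl⟩)
  exacts [h.2.2.1 hab, h.2.2.2 hab]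

lemma IsDiagonal.of_append_singleton {a b c d : V} {L₂ L₃ : List V}
    (hnd : (a :: (L₂ ++ b :: L₃)).Nodup) (h : IsDiagonal a (L₂ ++ [b]) c d) :
    IsDiagonal a (L₂ ++ b :: L₃) c d := by
  obtain ⟨hc, hd, hcd, hdc⟩ := h
  have hdisj : ∀ z ∈ a :: (L₂ ++ [b]), z ∉ L₃ := by
    have : ((a :: (L₂ ++ [b])) ++ L₃).Nodup := by simpa using hnd
    exact (List.nodup_append'.mp this).2.2
  -- the arcs share only `a` and `b`, so such an edge can only be `(b, a)`
  have hsecond : ∀ e ∈ a :: (L₂ ++ [b]), ∀ f ∈ a :: (L₂ ++ [b]),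
      (e, f) ∈ (b :: L₃).zip (L₃ ++ [a]) → (e, f) ∈ cyclePairs a (L₂ ++ [b]) := by
    intro e he f hf hef
    obtain ⟨he', hf'⟩ := List.of_mem_zip hef
    obtain rfl : e = b := by simpa [hdisj e he] using he'
    obtain rfl : f = a := by simpa [hdisj f hf] using hf'
    simp [cyclePairs_append_singleton]
  have hfirst : ∀ p ∈ (a :: L₂).zip (L₂ ++ [b]), p ∈ cyclePairs a (L₂ ++ [b]) := by
    intro p hp
    simp [cyclePairs_append_singleton, hp]
  refine ⟨by simp at hc ⊢; tauto, by simp at hd ⊢; tauto, ?_, ?_⟩ <;>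
    rw [cyclePairs_append_cons, List.mem_append, not_or]
  exacts [⟨fun h => hcd (hfirst _ h), fun h => hcd (hsecond c hc d hd h)⟩,
    ⟨fun h => hdc (hfirst _ h), fun h => hdc (hsecond d hd c hc h)⟩]

variable {G : MixedGraph V}

lemma IsUCycle.of_isRotated {v a : V} {l l₁ : List V} (h : (v :: l) ~r (a :: l₁))
    (hc : G.IsUCycle v l) : G.IsUCycle a l₁ := by
  obtain ⟨hlen, hnd, hund⟩ := hc
  exact ⟨h.perm.length_eq ▸ hlen, h.nodup_iff.mp hnd,
    fun p hp => hund p ((cyclePairs_isRotated h).mem_iff.mpr hp)⟩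

lemma IsChainGraph.not_dir_of_undir_of_undir (hG : G.IsChainGraph) {a b c : V}
    (hbc : G.undir b c) (hca : G.undir c a) : ¬ G.dir a b := by
  intro hab
  have hab' : a ≠ b := fun h => G.dir_irrefl a (h ▸ hab)
  have hbc' : b ≠ c := fun h => G.undir_irrefl b (h ▸ hbc)
  have hca' : c ≠ a := fun h => G.undir_irrefl c (h ▸ hca)
  refine hG a [b, c]
    ⟨by simp, by simp [hab', hbc', hca'.symm], ?_, (a, b), by simp [cyclePairs], hab⟩
  intro p hp
  simp only [cyclePairs, List.cons_append, List.nil_append, List.zip_cons_cons, List.zip_nil_left,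
    List.mem_cons, List.not_mem_nil, or_false] at hp
  rcases hp with rfl | rfl | rfl
  exacts [Or.inl hab, Or.inr hbc, Or.inr hca]

lemma IsChordalUndir.exists_chord_of_two_le_length {a b : V} {L₂ L₃ : List V}
    (hG : G.IsChordalUndir) (hcyc : G.IsUCycle a (L₂ ++ b :: L₃)) (hab : G.undir a b)
    (hL₂ : 2 ≤ L₂.length) :
    ∃ c d, G.undir c d ∧ IsDiagonal a (L₂ ++ b :: L₃) c d ∧ s(c, d) ≠ s(a, b) := by
  obtain ⟨-, hnd, hund⟩ := hcyc
  have harc : G.IsUCycle a (L₂ ++ [b]) := by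
    refine ⟨by simp; omega, hnd.sublist (by simp), ?_⟩
    rw [cyclePairs_append_singleton]
    intro p hp
    rcases List.mem_append.mp hp with hp | hp
    · exact hund p (by rw [cyclePairs_append_cons]; exact List.mem_append_left _ hp)
    · obtain rfl : p = (b, a) := by simpa using hp
      exact G.undir_symm a b hab
  obtain ⟨c, d, hc, hd, hcd, hdiag⟩ := hG a (L₂ ++ [b]) harc
  have hdiag : IsDiagonal a (L₂ ++ [b]) c d := ⟨hc, hd, hdiag⟩
  have hba : (b, a) ∈ cyclePairs a (L₂ ++ [b]) := by simp [cyclePairs_append_singleton]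
  exact ⟨c, d, hcd, hdiag.of_append_singleton hnd,
    fun h => hdiag.sym2_ne hba (h.trans Sym2.eq_swap)⟩

lemma IsChainGraph.exists_chord_of_square {a b p q : V} (hG : G.IsChainGraph)
    (hcyc : G.IsUCycle a [p, b, q]) (hcl : (G.nbhd a ∩ G.nbhd b).Pairwise G.adj) :
    ∃ c d, G.undir c d ∧ IsDiagonal a [p, b, q] c d ∧ s(c, d) ≠ s(a, b) := by
  obtain ⟨-, hnd, hund⟩ := hcyc
  simp only [cyclePairs, List.cons_append, List.nil_append, List.zip_cons_cons, List.zip_nil_right,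
    List.mem_cons, forall_eq_or_imp] at hund
  obtain ⟨hap, hpb, hbq, hqa, -⟩ := hund
  simp only [List.nodup_cons, List.mem_cons, List.not_mem_nil, or_false, not_or] at hnd
  obtain ⟨⟨hap', hab', haq'⟩, ⟨hpb', hpq'⟩, hbq', -⟩ := hnd
  have hpq : G.undir p q := by
    rcases hcl ⟨hap, G.undir_symm p b hpb⟩ ⟨G.undir_symm q a hqa, hbq⟩ hpq' with h | h | h
    exacts [absurd h (hG.not_dir_of_undir_of_undir hqa hap),
      absurd h (hG.not_dir_of_undir_of_undir hpb hbq), h]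
  refine ⟨p, q, hpq, ⟨by simp, by simp, ?_, ?_⟩, ?_⟩
  · simp [cyclePairs]; tauto
  · simp [cyclePairs]; tauto
  · simp; tauto

lemma IsChainGraph.exists_chord_ne_of_cons {a b : V} {L₂ L₃ : List V}
    (hchain : G.IsChainGraph) (hchord : G.IsChordalUndir)
    (hcyc : G.IsUCycle a (L₂ ++ b :: L₃)) (hab : G.undir a b)
    (hdiag : IsDiagonal a (L₂ ++ b :: L₃) a b) (hcl : (G.nbhd a ∩ G.nbhd b).Pairwise G.adj) :
    ∃ c d, G.undir c d ∧ IsDiagonal a (L₂ ++ b :: L₃) c d ∧ s(c, d) ≠ s(a, b) := by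
  by_cases h₂ : 2 ≤ L₂.length
  · exact hchord.exists_chord_of_two_le_length hcyc hab h₂
  by_cases h₃ : 2 ≤ L₃.length
  · have hrot : (a :: (L₂ ++ b :: L₃)) ~r (b :: (L₃ ++ a :: L₂)) := by
      simpa using List.isRotated_append (l := a :: L₂) (l' := b :: L₃)
    obtain ⟨c, d, hcd, hdiag', hne⟩ :=
      hchord.exists_chord_of_two_le_length (hcyc.of_isRotated hrot) (G.undir_symm a b hab) h₃
    exact ⟨c, d, hcd, (isDiagonal_iff_of_isRotated hrot).mpr hdiag',
      fun h => hne (h.trans Sym2.eq_swap)⟩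
  have hL₂ : L₂ ≠ [] := by
    rintro rfl
    exact hdiag.2.2.1 (by simp [cyclePairs])
  have hL₃ : L₃ ≠ [] := by
    rintro rfl
    exact hdiag.2.2.2 (by simp [cyclePairs_append_singleton])
  obtain ⟨p, rfl⟩ : ∃ p, L₂ = [p] := List.length_eq_one_iff.mp (by
    have := List.length_pos_iff.mpr hL₂; omega)
  obtain ⟨q, rfl⟩ : ∃ q, L₃ = [q] := List.length_eq_one_iff.mp (by
    have := List.length_pos_iff.mpr hL₃; omega)
  simpa using hchain.exists_chord_of_square (by simpa using hcyc) hcl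

lemma IsChainGraph.exists_chord_ne {v a b : V} {l : List V}
    (hchain : G.IsChainGraph) (hchord : G.IsChordalUndir) (hcyc : G.IsUCycle v l)
    (hab : G.undir a b) (hdiag : IsDiagonal v l a b)
    (hcl : (G.nbhd a ∩ G.nbhd b).Pairwise G.adj) :
    ∃ c d, G.undir c d ∧ IsDiagonal v l c d ∧ s(c, d) ≠ s(a, b) := by
  obtain ⟨l₁, l₂, hl⟩ := List.append_of_mem hdiag.1
  have hb : b ∈ l₂ ++ l₁ := by
    have hmem : b ∈ l₁ ++ a :: l₂ := hl ▸ hdiag.2.1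
    have hba : b ≠ a := fun h => G.undir_irrefl a (h ▸ hab)
    simp only [List.mem_append, List.mem_cons, hba, false_or] at hmem ⊢
    exact hmem.symm
  obtain ⟨L₂, L₃, hL⟩ := List.append_of_mem hb
  have hrot : (v :: l) ~r (a :: (L₂ ++ b :: L₃)) := by
    rw [hl, ← hL]
    simpa using List.isRotated_append (l := l₁) (l' := a :: l₂)
  simp only [isDiagonal_iff_of_isRotated hrot] at hdiag ⊢
  exact hchain.exists_chord_ne_of_cons hchord (hcyc.of_isRotated hrot) hab hdiag hcl

variable {G' : MixedGraph V}

lemma adj.mono {a b : V} (h : G'.adj a b) (hdir : ∀ a b, G'.dir a b → G.dir a b)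
    (hundir : ∀ a b, G'.undir a b → G.undir a b) : G.adj a b :=
  h.imp (hdir a b) (Or.imp (hdir b a) (hundir a b))

lemma IsChainGraph.mono (hG : G.IsChainGraph) (hdir : ∀ a b, G'.dir a b → G.dir a b)
    (hundir : ∀ a b, G'.undir a b → G.undir a b) : G'.IsChainGraph := by
  rintro v l ⟨hl, hnd, hedge, p, hp, hpdir⟩
  exact hG v l ⟨hl, hnd, fun q hq => (hedge q hq).imp (hdir _ _) (hundir _ _),
    p, hp, hdir _ _ hpdir⟩

lemma NoFlag.of_undir_subset (hchain : G.IsChainGraph) (hflag : G.NoFlag)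
    (hdir : ∀ a b, G'.dir a b ↔ G.dir a b) (hundir : ∀ a b, G'.undir a b → G.undir a b) :
    G'.NoFlag := by
  intro w u v hwu huv
  have hwu : G.dir w u := (hdir w u).mp hwu
  have huv : G.undir u v := hundir u v huv
  rcases hflag w u v hwu huv with h | h | h
  · exact Or.inl ((hdir w v).mpr h)
  · exact Or.inr (Or.inl ((hdir v w).mpr h))
  · exact absurd hwu (hchain.not_dir_of_undir_of_undir huv (G.undir_symm w v h))

lemma StronglyProtected.of_undir_subset {v u : V} (hdir : ∀ a b, G'.dir a b ↔ G.dir a b)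
    (hundir : ∀ a b, G'.undir a b → G.undir a b) (h : G.StronglyProtected v u) :
    G'.StronglyProtected v u := by
  have hadj : ∀ {a b}, G'.adj a b → G.adj a b :=
    fun h => h.mono (fun a b => (hdir a b).mp) hundir
  rcases h with ⟨w, hwv, hwu⟩ | ⟨w, hwu, hwv, hvw⟩ | ⟨w, hvw, hwu⟩ |
    ⟨w, w₁, hww₁, hvw, hvw₁, hwu, hw₁u, hnadj⟩
  · exact Or.inl ⟨w, (hdir w v).mpr hwv, mt hadj hwu⟩
  · exact Or.inr (Or.inl ⟨w, (hdir w u).mpr hwu, hwv, mt hadj hvw⟩)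
  · exact Or.inr (Or.inr (Or.inl ⟨w, (hdir v w).mpr hvw, (hdir w u).mpr hwu⟩))
  have hlost : ∀ w, G.undir v w → G.dir w u → ¬ G'.undir v w →
      G'.StronglyProtected v u := by
    intro w hvw hwu hnvw
    refine Or.inr (Or.inl ⟨w, (hdir w u).mpr hwu, fun h => G.undir_irrefl v (h ▸ hvw), ?_⟩)
    rintro (h | h | h)
    · exact G.not_both v w ((hdir v w).mp h) hvw
    · exact G.not_both w v ((hdir w v).mp h) (G.undir_symm v w hvw)
    · exact hnvw h
  by_cases h : G'.undir v w
  · by_cases h₁ : G'.undir v w₁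
    · exact Or.inr (Or.inr (Or.inr ⟨w, w₁, hww₁, h, h₁, (hdir w u).mpr hwu,
        (hdir w₁ u).mpr hw₁u, mt hadj hnadj⟩))
    · exact hlost w₁ hvw₁ hw₁u h₁
  · exact hlost w hvw hwu h

lemma IsChordalUndir.of_undir_iff_ne {x y : V} (hchain : G.IsChainGraph)
    (hchord : G.IsChordalUndir) (hcl : (G.nbhd x ∩ G.nbhd y).Pairwise G.adj)
    (hundir : ∀ a b, G'.undir a b ↔ G.undir a b ∧ s(a, b) ≠ s(x, y)) :
    G'.IsChordalUndir := by
  rintro v l ⟨hlen, hnd, hu⟩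
  have hcyc : G.IsUCycle v l := ⟨hlen, hnd, fun p hp => ((hundir _ _).mp (hu p hp)).1⟩
  obtain ⟨c, d, hc, hd, hcd, hdc, hdc'⟩ := hchord v l hcyc
  by_cases hdel : s(c, d) = s(x, y)
  · have hcl' : (G.nbhd c ∩ G.nbhd d).Pairwise G.adj := by
      rcases Sym2.eq_iff.mp hdel with ⟨rfl, rfl⟩ | ⟨rfl, rfl⟩
      exacts [hcl, Set.inter_comm _ _ ▸ hcl]
    obtain ⟨c', d', hcd', ⟨hc', hd', h₁, h₂⟩, hne⟩ :=
      hchain.exists_chord_ne hchord hcyc hcd ⟨hc, hd, hdc, hdc'⟩ hcl'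
    exact ⟨c', d', hc', hd', (hundir c' d').mpr ⟨hcd', hdel ▸ hne⟩, h₁, h₂⟩
  · exact ⟨c, d, hc, hd, (hundir c d).mpr ⟨hcd, hdel⟩, hdc, hdc'⟩

end MixedGraph

theorem stmt13_general {V : Type*} (G : MixedGraph V) (hG : G.IsCompletedPDAG)
    (x y : V)
    (hclique : ∀ a ∈ G.nbhd x ∩ G.nbhd y, ∀ b ∈ G.nbhd x ∩ G.nbhd y,
      a ≠ b → G.adj a b)
    (G' : MixedGraph V)
    (hdir : ∀ a b, G'.dir a b ↔ G.dir a b)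
    (hundir : ∀ a b, G'.undir a b ↔
      (G.undir a b ∧ ¬ ((a = x ∧ b = y) ∨ (a = y ∧ b = x)))) :
    G'.IsCompletedPDAG := by
  obtain ⟨hchain, hchord, hflag, hprot⟩ := hG
  have hundir' : ∀ a b, G'.undir a b ↔ G.undir a b ∧ s(a, b) ≠ s(x, y) := by
    simpa only [Ne, Sym2.eq_iff] using hundir
  have hsub : ∀ a b, G'.undir a b → G.undir a b := fun a b h => ((hundir a b).mp h).1
  exact ⟨hchain.mono (fun a b => (hdir a b).mp) hsub,
    hchord.of_undir_iff_ne hchain hclique hundir',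
    hflag.of_undir_subset hchain hdir hsub,
    fun v u hvu => (hprot v u ((hdir v u).mp hvu)).of_undir_subset hdir hsub⟩

/-- Deleting an undirected edge `x − y` of a completed PDAG whose common
neighbour set `N_x ∩ N_y` is a clique yields again a completed PDAG: a chain
graph with chordal chain components, no induced flag, and all directed edges
strongly protected. -/
theorem stmt13 {V : Type*} (G : MixedGraph V) (hG : G.IsCompletedPDAG)
    (x y : V) (hxy : G.undir x y)
    (hclique : ∀ a ∈ G.nbhd x ∩ G.nbhd y, ∀ b ∈ G.nbhd x ∩ G.nbhd y,
      a ≠ b → G.adj a b)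
    (G' : MixedGraph V)
    (hdir : ∀ a b, G'.dir a b ↔ G.dir a b)
    (hundir : ∀ a b, G'.undir a b ↔
      (G.undir a b ∧ ¬ ((a = x ∧ b = y) ∨ (a = y ∧ b = x)))) :
    G'.IsCompletedPDAG :=
  stmt13_general G hG x y hclique G' hdir hundir
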